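/- Let {X_n}_{n≥0} be a sequence of zero-mean random variables with finite second moments on a probability space. Suppose there is κ > 0 such that for all m ≥ 0 and n ≥ 1, E(Σ_{k=m}^{m+n-1} X_k)² ≪ (m+n)^κ − m^κ. Then for any δ > 0, almost surely Σ_{k=0}^{n-1} X_k = o(n^{κ/2 + δ}). -/

import Mathlib

open MeasureTheory Filter Finset

/-!
Dyadic chaining: for `t < 2 ^ p` the interval `[0, t)` is a disjoint union of at most one dyadic
block `[i 2 ^ l, (i + 1) 2 ^ l)` per level `l < p`, so by Cauchy–Schwarz `S_t ^ 2` is at most `p`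
times the sum of the squares of all dyadic blocks of these levels inside `[0, 2 ^ p)`. Along each
level the variance hypothesis telescopes, so that quantity has expectation `≪ p ^ 2 2 ^ (p κ)`.
Chebyshev and Borel–Cantelli then give, almost surely, `max_{t < 2 ^ p} S_t ^ 2 ≤ 2 ^ (p (κ + 2 δ))`
for all large `p`, i.e. `S_n = O(n ^ (κ / 2 + δ))` for every `δ > 0`; and `O` with `δ / 2` is `o`
with `δ`.
-/

def dyadicBlock (x : ℕ → ℝ) (l i : ℕ) : ℝ :=
  ∑ k ∈ Ico (i * 2 ^ l) ((i + 1) * 2 ^ l), x k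

def dyadicSquareSum (x : ℕ → ℝ) (p : ℕ) : ℝ :=
  ∑ l ∈ range p, ∑ i ∈ range (2 ^ (p - l)), dyadicBlock x l i ^ 2

lemma sum_Ico_eq_sum_sum_Ico_of_antitone (x : ℕ → ℝ) {b : ℕ → ℕ} (hb : Antitone b) (p : ℕ) :
    ∑ k ∈ Ico (b p) (b 0), x k = ∑ l ∈ range p, ∑ k ∈ Ico (b (l + 1)) (b l), x k := by
  have hIco : ∀ {m n}, m ≤ n → ∑ k ∈ Ico m n, x k = ∑ k ∈ range n, x k - ∑ k ∈ range m, x k :=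
    sum_Ico_eq_sub x
  rw [hIco (hb p.zero_le), ← sum_range_sub' (fun l => ∑ k ∈ range (b l), x k)]
  exact sum_congr rfl fun l _ => (hIco (hb l.le_succ)).symm

/- Between the consecutive truncations of `t` to multiples of `2 ^ (l + 1)` and of `2 ^ l` lies
either nothing or a single dyadic block of level `l`. -/
lemma abs_sum_Ico_div_mul_pow_le (x : ℕ → ℝ) {p t l : ℕ} (ht : t < 2 ^ p) (hl : l ≤ p) :
    |∑ k ∈ Ico (t / 2 ^ (l + 1) * 2 ^ (l + 1)) (t / 2 ^ l * 2 ^ l), x k| ≤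
      √(∑ i ∈ range (2 ^ (p - l)), dyadicBlock x l i ^ 2) := by
  set q := t / 2 ^ l
  have hlow : t / 2 ^ (l + 1) * 2 ^ (l + 1) = q / 2 * 2 * 2 ^ l := by
    rw [pow_succ, ← Nat.div_div_eq_div_mul, mul_comm (2 ^ l), mul_assoc]
  have hq : q < 2 ^ (p - l) := by
    rw [Nat.div_lt_iff_lt_mul (by positivity), ← pow_add, Nat.sub_add_cancel hl]
    exact ht
  rw [hlow]
  rcases Nat.mod_two_eq_zero_or_one q with heven | hodd
  · rw [Nat.div_mul_cancel (Nat.dvd_of_mod_eq_zero heven), Ico_self, sum_empty, abs_zero]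
    positivity
  · have hsucc : q / 2 * 2 + 1 = q := by omega
    rw [← Real.sqrt_sq_eq_abs]
    refine Real.sqrt_le_sqrt (single_le_sum (f := fun i => dyadicBlock x l i ^ 2)
      (fun i _ => sq_nonneg _) (mem_range.2 (by omega : q / 2 * 2 < 2 ^ (p - l)))) |>.trans_eq' ?_
    rw [dyadicBlock, hsucc]

lemma abs_sum_range_le_sum_sqrt (x : ℕ → ℝ) {p t : ℕ} (ht : t < 2 ^ p) :
    |∑ k ∈ range t, x k| ≤ ∑ l ∈ range p, √(∑ i ∈ range (2 ^ (p - l)), dyadicBlock x l i ^ 2) := by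
  have hb : Antitone fun l => t / 2 ^ l * 2 ^ l := by
    refine antitone_nat_of_succ_le fun l => ?_
    rw [pow_succ, ← Nat.div_div_eq_div_mul, mul_comm (2 ^ l), ← mul_assoc]
    exact Nat.mul_le_mul_right _ (Nat.div_mul_le_self _ _)
  have htel := sum_Ico_eq_sum_sum_Ico_of_antitone x hb p
  simp only [pow_zero, Nat.div_one, mul_one, Nat.div_eq_of_lt ht, zero_mul, ← range_eq_Ico] at htel
  rw [htel]
  exact (abs_sum_le_sum_abs _ _).trans <| sum_le_sum fun l hl =>
    abs_sum_Ico_div_mul_pow_le x ht (mem_range.1 hl).le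

lemma sq_sum_range_le_mul_dyadicSquareSum (x : ℕ → ℝ) {p t : ℕ} (ht : t < 2 ^ p) :
    (∑ k ∈ range t, x k) ^ 2 ≤ p * dyadicSquareSum x p := by
  calc (∑ k ∈ range t, x k) ^ 2
      ≤ (∑ l ∈ range p, √(∑ i ∈ range (2 ^ (p - l)), dyadicBlock x l i ^ 2)) ^ 2 := by
        rw [← sq_abs]
        exact pow_le_pow_left₀ (abs_nonneg _) (abs_sum_range_le_sum_sqrt x ht) 2
    _ ≤ p * dyadicSquareSum x p := by
        refine (sq_sum_le_card_mul_sum_sq).trans_eq ?_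
        rw [card_range, dyadicSquareSum]
        congr 1
        exact sum_congr rfl fun l _ => Real.sq_sqrt (sum_nonneg fun i _ => sq_nonneg _)

lemma isBigO_sum_range_of_eventually_mul_dyadicSquareSum_le {x : ℕ → ℝ} {α : ℝ} (hα : 0 ≤ α)
    (h : ∀ᶠ p in atTop, p * dyadicSquareSum x p ≤ ((2 : ℝ) ^ p) ^ (2 * α)) :
    (fun n => ∑ k ∈ range n, x k) =O[atTop] fun n => (n : ℝ) ^ α := by
  have hlog : Tendsto (fun n => Nat.log 2 n + 1) atTop atTop :=
    tendsto_atTop_atTop.2 fun b => ⟨2 ^ b, fun n hn => (Nat.le_log_of_pow_le one_lt_two hn).trans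
      (Nat.le_succ _)⟩
  refine Asymptotics.IsBigO.of_bound (2 ^ α) ?_
  filter_upwards [hlog.eventually h, eventually_ne_atTop 0] with n hn hn0
  set p := Nat.log 2 n + 1
  have hpn : (2 : ℝ) ^ p ≤ 2 * n := by
    rw [pow_succ, mul_comm]
    exact_mod_cast Nat.mul_le_mul_left 2 (Nat.pow_log_le_self 2 hn0)
  rw [Real.norm_eq_abs, Real.norm_of_nonneg (by positivity),
    ← Real.mul_rpow zero_le_two n.cast_nonneg]
  refine abs_le_of_sq_le_sq ?_ (by positivity)
  calc (∑ k ∈ range n, x k) ^ 2 ≤ p * dyadicSquareSum x p :=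
        sq_sum_range_le_mul_dyadicSquareSum x (Nat.lt_pow_succ_log_self one_lt_two n)
    _ ≤ ((2 : ℝ) ^ p) ^ (2 * α) := hn
    _ ≤ (2 * n) ^ (2 * α) := Real.rpow_le_rpow (by positivity) hpn (by positivity)
    _ = ((2 * n) ^ α) ^ 2 := by
        rw [mul_comm 2 α, Real.rpow_mul (by positivity)]
        exact_mod_cast Real.rpow_natCast _ 2

lemma tendsto_div_rpow_of_isBigO_rpow {f : ℕ → ℝ} {a b : ℝ}
    (hf : f =O[atTop] fun n => (n : ℝ) ^ a) (hab : a < b) :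
    Tendsto (fun n => f n / (n : ℝ) ^ b) atTop (nhds 0) := by
  have hlim : Tendsto (fun n : ℕ => (n : ℝ) ^ a * ((n : ℝ) ^ b)⁻¹) atTop (nhds 0) := by
    refine ((tendsto_rpow_neg_atTop (sub_pos.2 hab)).comp tendsto_natCast_atTop_atTop).congr' ?_
    filter_upwards [eventually_gt_atTop 0] with n hn
    rw [Function.comp_apply, neg_sub, Real.rpow_sub (Nat.cast_pos.2 hn), div_eq_mul_inv]
  simpa only [div_eq_mul_inv] using
    (hf.mul (Asymptotics.isBigO_refl (fun n : ℕ => ((n : ℝ) ^ b)⁻¹) atTop)).trans_tendsto hlim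

section SquareIntegrable

variable {Ω : Type*} [MeasurableSpace Ω] {μ : Measure Ω} {X : ℕ → Ω → ℝ}

lemma integrable_dyadicBlock_sq (hmem : ∀ k, MemLp (X k) 2 μ) (l i : ℕ) :
    Integrable (fun ω => dyadicBlock (X · ω) l i ^ 2) μ :=
  (memLp_finsetSum _ fun k _ => hmem k).integrable_sq

lemma integrable_dyadicSquareSum (hmem : ∀ k, MemLp (X k) 2 μ) (p : ℕ) :
    Integrable (fun ω => dyadicSquareSum (X · ω) p) μ :=
  integrable_finsetSum _ fun l _ => integrable_finsetSum _ fun i _ =>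
    integrable_dyadicBlock_sq hmem l i

lemma sum_integral_dyadicBlock_sq_le {F : ℕ → ℝ}
    (hvar : ∀ m n : ℕ, 1 ≤ n → ∫ ω, (∑ k ∈ Ico m (m + n), X k ω) ^ 2 ∂μ ≤ F (m + n) - F m)
    (l N : ℕ) :
    ∑ i ∈ range N, ∫ ω, dyadicBlock (X · ω) l i ^ 2 ∂μ ≤ F (N * 2 ^ l) - F 0 := by
  calc ∑ i ∈ range N, ∫ ω, dyadicBlock (X · ω) l i ^ 2 ∂μ
      ≤ ∑ i ∈ range N, (F ((i + 1) * 2 ^ l) - F (i * 2 ^ l)) := sum_le_sum fun i _ => by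
        simpa only [dyadicBlock, add_one_mul] using hvar (i * 2 ^ l) (2 ^ l) Nat.one_le_two_pow
    _ = F (N * 2 ^ l) - F 0 := by
        rw [sum_range_sub (fun i => F (i * 2 ^ l)), zero_mul]

lemma integral_dyadicSquareSum_le (hmem : ∀ k, MemLp (X k) 2 μ) {F : ℕ → ℝ}
    (hvar : ∀ m n : ℕ, 1 ≤ n → ∫ ω, (∑ k ∈ Ico m (m + n), X k ω) ^ 2 ∂μ ≤ F (m + n) - F m)
    (p : ℕ) :
    ∫ ω, dyadicSquareSum (X · ω) p ∂μ ≤ p * (F (2 ^ p) - F 0) := by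
  simp only [dyadicSquareSum]
  rw [integral_finsetSum _ fun l _ => integrable_finsetSum _ fun i _ =>
    integrable_dyadicBlock_sq hmem l i]
  calc ∑ l ∈ range p, ∫ ω, ∑ i ∈ range (2 ^ (p - l)), dyadicBlock (X · ω) l i ^ 2 ∂μ
      ≤ ∑ l ∈ range p, (F (2 ^ p) - F 0) := sum_le_sum fun l hl => by
        rw [integral_finsetSum _ fun i _ => integrable_dyadicBlock_sq hmem l i]
        simpa only [← pow_add, Nat.sub_add_cancel (mem_range.1 hl).le] using
          sum_integral_dyadicBlock_sq_le hvar l (2 ^ (p - l))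
    _ = p * (F (2 ^ p) - F 0) := by rw [sum_const, card_range, nsmul_eq_mul]

lemma ae_eventually_le_of_summable_integral_div {W : ℕ → Ω → ℝ} {a c : ℕ → ℝ}
    (hW : ∀ p, 0 ≤ᵐ[μ] W p) (hint : ∀ p, Integrable (W p) μ)
    (hc : ∀ p, 0 < c p) (ha : ∀ p, ∫ ω, W p ω ∂μ ≤ a p) (hsum : Summable fun p => a p / c p) :
    ∀ᵐ ω ∂μ, ∀ᶠ p in atTop, W p ω ≤ c p := by
  have hmarkov : ∀ p, μ {ω | c p < W p ω} ≤ ENNReal.ofReal (a p / c p) := fun p => by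
    refine (measure_mono (Set.ofPred_subset_ofPred.2 fun ω => le_of_lt)).trans ?_
    rw [← ofReal_measureReal ((hint p).measure_ge_lt_top (hc p)).ne]
    refine ENNReal.ofReal_le_ofReal ?_
    rw [le_div_iff₀' (hc p)]
    exact (mul_meas_ge_le_integral_of_nonneg (hW p) (hint p) (c p)).trans (ha p)
  have hfin : ∑' p, μ {ω | c p < W p ω} ≠ ⊤ :=
    ne_top_of_le_ne_top hsum.tsum_ofReal_ne_top (ENNReal.tsum_le_tsum hmarkov)
  filter_upwards [ae_eventually_notMem hfin] with ω hω
  exact hω.mono fun p hp => not_lt.1 hp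

theorem ae_isBigO_sum_range_rpow (hmem : ∀ k, MemLp (X k) 2 μ) {κ C : ℝ} (hκ : 0 < κ)
    (hvar : ∀ m n : ℕ, 1 ≤ n →
      ∫ ω, (∑ k ∈ Ico m (m + n), X k ω) ^ 2 ∂μ ≤ C * ((m + n : ℝ) ^ κ - (m : ℝ) ^ κ))
    {δ : ℝ} (hδ : 0 < δ) :
    ∀ᵐ ω ∂μ, (fun n => ∑ k ∈ range n, X k ω) =O[atTop] fun n => (n : ℝ) ^ (κ / 2 + δ) := by
  set F : ℕ → ℝ := fun m => C * (m : ℝ) ^ κ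
  have hF : ∀ m n : ℕ, 1 ≤ n → ∫ ω, (∑ k ∈ Ico m (m + n), X k ω) ^ 2 ∂μ ≤ F (m + n) - F m :=
    fun m n hn => by simpa only [F, mul_sub, Nat.cast_add] using hvar m n hn
  set r : ℝ := ((2 : ℝ) ^ (2 * δ))⁻¹
  have hr : ‖r‖ < 1 := by
    rw [Real.norm_of_nonneg (by positivity)]
    exact inv_lt_one_of_one_lt₀ (Real.one_lt_rpow one_lt_two (by positivity))
  have hratio : ∀ p : ℕ, p * (p * (F (2 ^ p) - F 0)) / ((2 : ℝ) ^ p) ^ (2 * (κ / 2 + δ)) =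
      C * ((p : ℝ) ^ 2 * r ^ p) := fun p => by
    have h2p : (0 : ℝ) < 2 ^ p := by positivity
    rw [show 2 * (κ / 2 + δ) = κ + 2 * δ by ring, Real.rpow_add h2p,
      ← Real.rpow_pow_comm zero_le_two (2 * δ), inv_pow]
    simp only [F, Nat.cast_pow, Nat.cast_ofNat, Nat.cast_zero, Real.zero_rpow hκ.ne', mul_zero,
      sub_zero]
    field_simp
  have hbound := ae_eventually_le_of_summable_integral_div
    (W := fun p ω => p * dyadicSquareSum (X · ω) p)
    (fun p => ae_of_all _ fun ω => mul_nonneg p.cast_nonneg <|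
      sum_nonneg fun l _ => sum_nonneg fun i _ => sq_nonneg _)
    (fun p => (integrable_dyadicSquareSum hmem p).const_mul _)
    (fun p => by positivity)
    (fun p => by
      rw [integral_const_mul]
      exact mul_le_mul_of_nonneg_left (integral_dyadicSquareSum_le hmem hF p) p.cast_nonneg)
    (((summable_pow_mul_geometric_of_norm_lt_one 2 hr).mul_left C).congr fun p => (hratio p).symm)
  filter_upwards [hbound] with ω hω
  exact isBigO_sum_range_of_eventually_mul_dyadicSquareSum_le (by positivity) hω

end SquareIntegrable

theorem gal_koksma_general {Ω : Type*} [MeasurableSpace Ω] (μ : Measure Ω)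
    (X : ℕ → Ω → ℝ)
    (hmem : ∀ k, MemLp (X k) 2 μ)
    (κ : ℝ) (hκ : 0 < κ)
    (hvar : ∃ C : ℝ, 0 < C ∧ ∀ m n : ℕ, 1 ≤ n →
      ∫ ω, (∑ k ∈ Finset.Ico m (m + n), X k ω) ^ 2 ∂μ ≤
        C * ((m + n : ℝ) ^ κ - (m : ℝ) ^ κ)) :
    ∀ δ : ℝ, 0 < δ →
      ∀ᵐ ω ∂μ, Tendsto
        (fun n : ℕ => (∑ k ∈ Finset.range n, X k ω) / (n : ℝ) ^ (κ / 2 + δ))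
        atTop (nhds 0) := by
  intro δ hδ
  obtain ⟨C, -, hvar⟩ := hvar
  filter_upwards [ae_isBigO_sum_range_rpow hmem hκ hvar (half_pos hδ)] with ω hω
  exact tendsto_div_rpow_of_isBigO_rpow hω (by linarith)

/-- Gal–Koksma theorem (special case): if a zero-mean, square-integrable process
satisfies `E(Σ_{k=m}^{m+n-1} X_k)² ≪ (m+n)^κ − m^κ`, then for any `δ > 0`,
almost surely `Σ_{k=0}^{n-1} X_k = o(n^{κ/2+δ})`. -/
theorem gal_koksma {Ω : Type*} [MeasurableSpace Ω] (μ : Measure Ω)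
    [IsProbabilityMeasure μ] (X : ℕ → Ω → ℝ)
    (hmem : ∀ k, MemLp (X k) 2 μ)
    (hmean : ∀ k, ∫ ω, X k ω ∂μ = 0)
    (κ : ℝ) (hκ : 0 < κ)
    (hvar : ∃ C : ℝ, 0 < C ∧ ∀ m n : ℕ, 1 ≤ n →
      ∫ ω, (∑ k ∈ Finset.Ico m (m + n), X k ω) ^ 2 ∂μ ≤
        C * ((m + n : ℝ) ^ κ - (m : ℝ) ^ κ)) :
    ∀ δ : ℝ, 0 < δ →
      ∀ᵐ ω ∂μ, Tendsto
        (fun n : ℕ => (∑ k ∈ Finset.range n, X k ω) / (n : ℝ) ^ (κ / 2 + δ))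
        atTop (nhds 0) :=
  gal_koksma_general μ X hmem κ hκ hvar
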